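/- Let G be a finite group, N a normal subgroup of G, and H a subgroup of G. Then H is pronormal in G if and only if HN/N is pronormal in G/N and H is pronormal in N_G(HN). -/

import Mathlib

/-!
Pronormality passes to overgroups and to surjective images, which gives one direction.
Conversely, given `g`, pronormality of `HN/N` yields `k₀ ∈ ⟨H, H^g⟩` with `H^k₀ N = H^g N`,
so `k₀⁻¹ g` normalizes `HN`. Pronormality of `H` in `N_G(HN)` then yields
`k₁ ∈ ⟨H, H^(k₀⁻¹ g)⟩ ≤ ⟨H, H^g⟩` with `H^k₁ = H^(k₀⁻¹ g)`, and `k₀ k₁` conjugates `H` to `H^g`.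
-/

open Pointwise

/-- `H` is pronormal in `G`: for every `g`, `H` and `H^g` are conjugate in `⟨H, H^g⟩`. -/
def Pronormal {G : Type*} [Group G] (H : Subgroup G) : Prop :=
  ∀ g : G, ∃ k ∈ (H ⊔ MulAut.conj g • H : Subgroup G),
    MulAut.conj k • H = MulAut.conj g • H

namespace Subgroup

variable {G K : Type*} [Group G] [Group K]

theorem map_conj_smul (f : G →* K) (g : G) (H : Subgroup G) :
    (MulAut.conj g • H).map f = MulAut.conj (f g) • H.map f := by
  ext x
  simp only [mem_map, mem_smul_pointwise_iff_exists, MulAut.smul_def, MulAut.conj_apply]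
  constructor
  · rintro ⟨-, ⟨h, hh, rfl⟩, rfl⟩
    exact ⟨f h, ⟨h, hh, rfl⟩, by simp⟩
  · rintro ⟨-, ⟨h, hh, rfl⟩, rfl⟩
    exact ⟨g * h * g⁻¹, ⟨h, hh, rfl⟩, by simp⟩

theorem conj_smul_eq_self_iff_mem_normalizer {H : Subgroup G} {g : G} :
    MulAut.conj g • H = H ↔ g ∈ normalizer (H : Set G) :=
  conjAct_pointwise_smul_iff

theorem sup_conj_smul_le_of_mem {H : Subgroup G} {g k : G} (hk : k ∈ H ⊔ MulAut.conj g • H) :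
    H ⊔ MulAut.conj (k⁻¹ * g) • H ≤ H ⊔ MulAut.conj g • H := by
  refine sup_le le_sup_left ?_
  calc MulAut.conj (k⁻¹ * g) • H
      = MulAut.conj k⁻¹ • MulAut.conj g • H := by rw [map_mul, mul_smul]
    _ ≤ MulAut.conj k⁻¹ • (H ⊔ MulAut.conj g • H) :=
        pointwise_smul_le_pointwise_smul_iff.mpr le_sup_right
    _ = H ⊔ MulAut.conj g • H := conj_smul_eq_self_of_mem (inv_mem hk)

theorem mem_normalizer_sup_of_conj_smul_sup_eq {H N : Subgroup G} [N.Normal] {g k : G}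
    (h : MulAut.conj k • H ⊔ N = MulAut.conj g • H ⊔ N) :
    k⁻¹ * g ∈ normalizer ((H ⊔ N : Subgroup G) : Set G) := by
  rw [← conj_smul_eq_self_iff_mem_normalizer, map_mul, mul_smul, smul_sup,
    Normal.conj_smul_eq_self g N, ← h, smul_sup, Normal.conj_smul_eq_self k⁻¹ N, map_inv,
    inv_smul_smul]

end Subgroup

open Subgroup

section

variable {G G' : Type*} [Group G] [Group G']

theorem pronormal_subgroupOf_iff {H K : Subgroup G} (hHK : H ≤ K) :
    Pronormal (H.subgroupOf K) ↔
      ∀ g ∈ K, ∃ k ∈ H ⊔ MulAut.conj g • H, MulAut.conj k • H = MulAut.conj g • H := by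
  have hmap (x : K) :
      (MulAut.conj x • H.subgroupOf K).map K.subtype = MulAut.conj (x : G) • H := by
    rw [map_conj_smul, map_subgroupOf_eq_of_le hHK]
    rfl
  have hsup (x : K) : (H.subgroupOf K ⊔ MulAut.conj x • H.subgroupOf K).map K.subtype =
      H ⊔ MulAut.conj (x : G) • H := by
    rw [Subgroup.map_sup, hmap, map_subgroupOf_eq_of_le hHK]
  have hconj (x y : K) : MulAut.conj y • H.subgroupOf K = MulAut.conj x • H.subgroupOf K ↔
      MulAut.conj (y : G) • H = MulAut.conj (x : G) • H := by
    rw [← hmap, ← hmap, (map_injective K.subtype_injective).eq_iff]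
  constructor
  · intro hH g hg
    obtain ⟨k, hk, h⟩ := hH ⟨g, hg⟩
    refine ⟨k, ?_, (hconj _ _).1 h⟩
    simpa only [hsup, coe_subtype] using mem_map_of_mem K.subtype hk
  · intro hH x
    obtain ⟨k, hk, h⟩ := hH x x.2
    have hkK : k ∈ K := sup_le hHK (conj_smul_le_of_le hHK x) hk
    refine ⟨⟨k, hkK⟩, ?_, (hconj _ _).2 h⟩
    rwa [← mem_map_iff_mem K.subtype_injective, hsup]

theorem pronormal_map_iff {f : G →* G'} (hf : Function.Surjective f) (H : Subgroup G) :
    Pronormal (H.map f) ↔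
      ∀ g : G, ∃ k ∈ H ⊔ MulAut.conj g • H,
        (MulAut.conj k • H).map f = (MulAut.conj g • H).map f := by
  constructor
  · intro hH g
    obtain ⟨k', hk', h⟩ := hH (f g)
    rw [← map_conj_smul, ← Subgroup.map_sup] at hk'
    obtain ⟨k, hk, rfl⟩ := hk'
    exact ⟨k, hk, by rw [map_conj_smul, map_conj_smul, h]⟩
  · intro hH g'
    obtain ⟨g, rfl⟩ := hf g'
    obtain ⟨k, hk, h⟩ := hH g
    refine ⟨f k, ?_, ?_⟩
    · rw [← map_conj_smul, ← Subgroup.map_sup]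
      exact mem_map_of_mem f hk
    · rw [← map_conj_smul, ← map_conj_smul, h]

theorem pronormal_map_mk'_iff (N : Subgroup G) [N.Normal] (H : Subgroup G) :
    Pronormal (H.map (QuotientGroup.mk' N)) ↔
      ∀ g : G, ∃ k ∈ H ⊔ MulAut.conj g • H,
        MulAut.conj k • H ⊔ N = MulAut.conj g • H ⊔ N := by
  simp_rw [pronormal_map_iff (QuotientGroup.mk'_surjective N), map_eq_map_iff,
    QuotientGroup.ker_mk']

theorem Pronormal.map {H : Subgroup G} (hH : Pronormal H) {f : G →* G'}
    (hf : Function.Surjective f) : Pronormal (H.map f) :=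
  (pronormal_map_iff hf H).2 fun g => (hH g).imp fun _ ⟨hk, h⟩ => ⟨hk, congrArg _ h⟩

theorem Pronormal.subgroupOf {H K : Subgroup G} (hH : Pronormal H) (hHK : H ≤ K) :
    Pronormal (H.subgroupOf K) :=
  (pronormal_subgroupOf_iff hHK).2 fun g _ => hH g

end

theorem pronormal_iff_map_quotient_and_pronormal_in_normalizer_general
    {G : Type*} [Group G] (N : Subgroup G) [N.Normal] (H : Subgroup G) :
    Pronormal H ↔
      Pronormal (H.map (QuotientGroup.mk' N)) ∧
        Pronormal (H.subgroupOf (Subgroup.normalizer ((H ⊔ N : Subgroup G) : Set G))) := by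
  have hHM : H ≤ normalizer ((H ⊔ N : Subgroup G) : Set G) := le_sup_left.trans le_normalizer
  refine ⟨fun hH => ⟨hH.map (QuotientGroup.mk'_surjective N), hH.subgroupOf hHM⟩, ?_⟩
  rintro ⟨hquot, hnorm⟩ g
  rw [pronormal_map_mk'_iff] at hquot
  rw [pronormal_subgroupOf_iff hHM] at hnorm
  obtain ⟨k₀, hk₀, hk₀N⟩ := hquot g
  obtain ⟨k₁, hk₁, hk₁H⟩ := hnorm _ (mem_normalizer_sup_of_conj_smul_sup_eq hk₀N)
  refine ⟨k₀ * k₁, mul_mem hk₀ (sup_conj_smul_le_of_mem hk₀ hk₁), ?_⟩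
  rw [map_mul, mul_smul, hk₁H, ← mul_smul, ← map_mul, mul_inv_cancel_left]

theorem pronormal_iff_map_quotient_and_pronormal_in_normalizer
    {G : Type*} [Group G] [Finite G] (N : Subgroup G) [N.Normal] (H : Subgroup G) :
    Pronormal H ↔
      Pronormal (H.map (QuotientGroup.mk' N)) ∧
        Pronormal (H.subgroupOf (Subgroup.normalizer ((H ⊔ N : Subgroup G) : Set G))) :=
  pronormal_iff_map_quotient_and_pronormal_in_normalizer_general N H
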